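/- For a prime p and m ≥ 1, a_3'(p^m) = (p^{2m}(p+1)^2 - p^{m+1})·(p-1)/p^3, where a_3'(k) = Σ_{d_1 d_2 d_3 = k} Π_{i=1}^3 Σ_{g|d_i} μ(g)(d_i/g)^{i-1}. -/

import Mathlib

open Finset ArithmeticFunction

/-- The set of n-tuples of positive integers with product k. -/
def tuples (n k : ℕ) : Finset (Fin n → ℕ) :=
  (Fintype.piFinset fun _ => k.divisors).filter fun d => ∏ i, d i = k

/-- a_n(k) = Σ_{d_1⋯d_n = k} d_1^0 d_2^1 ⋯ d_n^{n-1}. -/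
def an (n k : ℕ) : ℕ := ∑ d ∈ tuples n k, ∏ i : Fin n, d i ^ (i : ℕ)

/-- a_n'(k) = Σ_{d_1⋯d_n = k} Π_i Σ_{g ∣ d_i} μ(g) (d_i/g)^{i-1}. -/
def an' (n k : ℕ) : ℤ :=
  ∑ d ∈ tuples n k, ∏ i : Fin n,
    ∑ g ∈ (d i).divisors, moebius g * ((d i / g : ℕ) : ℤ) ^ (i : ℕ)

/-
The inner sums are Jordan's totients `J_j = μ * id^j`, and `J_0` is the unit of Dirichlet
convolution, so `a_3' = J_1 * J_2`. On prime powers `J_j(p^(e+1)) = p^(e j) (p^j - 1)`, hence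
`J_2(p^(c+1)) = p^2 J_2(p^c)` except at `c = 0`, where one is subtracted. This gives the recurrence
`a_3'(p^(m+1)) = p^2 a_3'(p^m) + J_1(p^(m+1)) - J_1(p^m)`, and the closed form follows by induction
from `a_3'(p) = (p - 1)(p + 2)`.
-/

def jordanTotient (j d : ℕ) : ℤ := ∑ g ∈ d.divisors, moebius g * ((d / g : ℕ) : ℤ) ^ j

theorem jordanTotient_zero (d : ℕ) : jordanTotient 0 d = if d = 1 then 1 else 0 := by
  have := congrArg (· d) moebius_mul_coe_zeta
  simp only [coe_mul_zeta_apply, one_apply] at this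
  simpa [jordanTotient] using this

theorem jordanTotient_one_right (j : ℕ) : jordanTotient j 1 = 1 := by
  simp [jordanTotient]

theorem jordanTotient_prime_pow_succ {p : ℕ} (hp : p.Prime) (j e : ℕ) :
    jordanTotient j (p ^ (e + 1)) = (p : ℤ) ^ (e * j) * ((p : ℤ) ^ j - 1) := by
  have moebius_pow_add_two (k : ℕ) : moebius (p ^ (k + 2)) = 0 := by
    rw [moebius_apply_prime_pow hp (by omega), if_neg (by omega)]
  rw [jordanTotient, Nat.sum_divisors_prime_pow hp, sum_range_succ', sum_range_succ',
    sum_eq_zero fun k _ => by rw [moebius_pow_add_two, zero_mul],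
    Nat.pow_div (by omega) hp.pos, Nat.pow_div (by omega) hp.pos]
  simp only [zero_add, pow_one, moebius_apply_prime hp, pow_zero, moebius_apply_one,
    Nat.add_sub_cancel, Nat.sub_zero]
  push_cast
  ring

theorem jordanTotient_prime_pow_succ_eq_mul_sub {p : ℕ} (hp : p.Prime) (j c : ℕ) :
    jordanTotient j (p ^ (c + 1)) =
      (p : ℤ) ^ j * jordanTotient j (p ^ c) - if c = 0 then 1 else 0 := by
  rcases c with _ | c
  · rw [jordanTotient_prime_pow_succ hp, pow_zero, jordanTotient_one_right, if_pos rfl]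
    ring
  · rw [jordanTotient_prime_pow_succ hp, jordanTotient_prime_pow_succ hp, if_neg c.succ_ne_zero]
    ring

theorem tuples_eq_finMulAntidiag (n k : ℕ) : tuples n k = Nat.finMulAntidiag n k := by
  rcases eq_or_ne k 0 with rfl | hk
  · ext d
    simp only [tuples, mem_filter, Fintype.mem_piFinset, Nat.divisors_zero, notMem_empty,
      Nat.finMulAntidiag_zero_right, iff_false, not_and]
    intro h
    have : IsEmpty (Fin n) := ⟨h⟩
    simp
  · exact (Nat.finMulAntidiag_eq_piFinset_divisors_filter dvd_rfl hk).symm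

theorem an'_three_eq_sum_divisorsAntidiagonal (k : ℕ) :
    an' 3 k = ∑ x ∈ k.divisorsAntidiagonal, jordanTotient 1 x.1 * jordanTotient 2 x.2 := by
  have prod_three (d : Fin 3 → ℕ) : ∏ i : Fin 3, jordanTotient i (d i) =
      jordanTotient 0 (d 0) * jordanTotient 1 (d 1) * jordanTotient 2 (d 2) :=
    Fin.prod_univ_three _
  have cons_one_injective : Function.Injective fun x : ℕ × ℕ => ![1, x.1, x.2] :=
    fun x y h => Prod.ext (congrFun h 1) (congrFun h 2)
  calc an' 3 k = ∑ d ∈ Nat.finMulAntidiag 3 k, ∏ i : Fin 3, jordanTotient i (d i) := by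
        rw [← tuples_eq_finMulAntidiag]; rfl
    _ = ∑ d ∈ k.divisorsAntidiagonal.image fun x => ![1, x.1, x.2],
          ∏ i : Fin 3, jordanTotient i (d i) := by
      refine (sum_subset (fun d hd => ?_) fun d hd hd' => ?_).symm
      · obtain ⟨x, hx, rfl⟩ := mem_image.mp hd
        rw [Nat.mem_divisorsAntidiagonal] at hx
        simpa [Fin.prod_univ_three] using hx
      · rw [prod_three, jordanTotient_zero, if_neg, zero_mul, zero_mul]
        intro h1
        refine hd' (mem_image.mpr ⟨(d 1, d 2), ?_, ?_⟩)
        · rw [Nat.mem_finMulAntidiag, Fin.prod_univ_three, h1, one_mul] at hd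
          exact Nat.mem_divisorsAntidiagonal.mpr hd
        · funext i
          fin_cases i <;> simp [h1]
    _ = _ := by
      rw [sum_image cons_one_injective.injOn]
      simp [prod_three, jordanTotient_zero]

theorem an'_three_prime_pow {p : ℕ} (hp : p.Prime) (m : ℕ) :
    an' 3 (p ^ m) =
      ∑ i ∈ range (m + 1), jordanTotient 1 (p ^ i) * jordanTotient 2 (p ^ (m - i)) := by
  rw [an'_three_eq_sum_divisorsAntidiagonal,
    Nat.sum_divisorsAntidiagonal fun a b => jordanTotient 1 a * jordanTotient 2 b,
    Nat.sum_divisors_prime_pow hp]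
  refine sum_congr rfl fun i hi => ?_
  rw [Nat.pow_div (Nat.lt_succ_iff.mp (mem_range.mp hi)) hp.pos]

theorem an'_three_prime_pow_succ {p : ℕ} (hp : p.Prime) (m : ℕ) :
    an' 3 (p ^ (m + 1)) =
      (p : ℤ) ^ 2 * an' 3 (p ^ m) + jordanTotient 1 (p ^ (m + 1)) - jordanTotient 1 (p ^ m) := by
  have shift : ∀ i ∈ range (m + 1), jordanTotient 1 (p ^ i) * jordanTotient 2 (p ^ (m + 1 - i)) =
      (p : ℤ) ^ 2 * (jordanTotient 1 (p ^ i) * jordanTotient 2 (p ^ (m - i))) -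
        if m = i then jordanTotient 1 (p ^ i) else 0 := by
    intro i hi
    have hi' := Nat.lt_succ_iff.mp (mem_range.mp hi)
    rw [Nat.sub_add_comm hi', jordanTotient_prime_pow_succ_eq_mul_sub hp]
    split_ifs <;> first | omega | ring
  rw [an'_three_prime_pow hp, an'_three_prime_pow hp, sum_range_succ, Nat.sub_self,
    sum_congr rfl shift, sum_sub_distrib, ← mul_sum, sum_ite_eq, if_pos (self_mem_range_succ m)]
  simp only [pow_zero, jordanTotient_one_right, mul_one]
  ring

theorem pow_three_mul_an'_three_prime_pow {p : ℕ} (hp : p.Prime) {m : ℕ} (hm : 1 ≤ m) :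
    (p : ℤ) ^ 3 * an' 3 (p ^ m) = ((p : ℤ) ^ (2 * m) * (p + 1) ^ 2 - p ^ (m + 1)) * (p - 1) := by
  induction m, hm using Nat.le_induction with
  | base =>
    rw [an'_three_prime_pow hp, sum_range_succ, sum_range_one, Nat.sub_zero, Nat.sub_self,
      pow_zero, jordanTotient_one_right, jordanTotient_one_right, jordanTotient_prime_pow_succ hp,
      jordanTotient_prime_pow_succ hp]
    ring
  | succ m hm ih =>
    obtain ⟨k, rfl⟩ := Nat.exists_eq_add_of_le' hm
    rw [an'_three_prime_pow_succ hp, jordanTotient_prime_pow_succ hp,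
      jordanTotient_prime_pow_succ hp]
    linear_combination (p : ℤ) ^ 2 * ih

theorem a3'_closed_form (p : ℕ) (hp : p.Prime) (m : ℕ) (hm : 1 ≤ m) :
    (an' 3 (p ^ m) : ℝ) =
      ((p : ℝ) ^ (2 * m) * ((p : ℝ) + 1) ^ 2 - (p : ℝ) ^ (m + 1)) * ((p : ℝ) - 1) /
        (p : ℝ) ^ 3 := by
  rw [eq_div_iff (pow_ne_zero 3 (Nat.cast_ne_zero.mpr hp.ne_zero)), mul_comm]
  exact_mod_cast pow_three_mul_an'_three_prime_pow hp hm
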